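/- arXiv:2012.03311 — 7 statements merged into one kernel-verified Lean document; each statement's English description precedes it below -/
import Mathlib

section
/- For each regular infinite real matrix A, there exists a sequence x with values in {0,1} such that either Ax is not well defined or Ax is not statistically convergent. -/
open Filter Topology

/-- Characteristic function identifying a subset of ℕ with a point of Cantor space. -/
noncomputable def chi (S : Set ℕ) : ℕ → Bool := fun n => @decide (n ∈ S) (Classical.dec _)

/-- `I` is an ideal on ℕ: hereditary, closed under finite unions, contains all
finite sets, and does not contain ℕ. -/
structure IsIdeal (I : Set (Set ℕ)) : Prop where
  mem_of_subset : ∀ ⦃S T : Set ℕ⦄, S ⊆ T → T ∈ I → S ∈ I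
  union_mem : ∀ ⦃S T : Set ℕ⦄, S ∈ I → T ∈ I → S ∪ T ∈ I
  finite_mem : ∀ ⦃S : Set ℕ⦄, S.Finite → S ∈ I
  univ_not_mem : Set.univ ∉ I

/-- The dual filter of an ideal. -/
def dualFilter (I : Set (Set ℕ)) : Set (Set ℕ) := {S | Sᶜ ∈ I}

/-- A real sequence is bounded. -/
def Bdd (y : ℕ → ℝ) : Prop := ∃ M : ℝ, ∀ n, |y n| ≤ M

/-- The series ∑ₖ f k converges (its partial sums converge). -/
def SeriesConv (f : ℕ → ℝ) : Prop :=
  ∃ l : ℝ, Tendsto (fun N => ∑ k ∈ Finset.range N, f k) atTop (𝓝 l)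

/-- The value of the series ∑ₖ f k (the limit of partial sums, when it exists). -/
noncomputable def seriesSum (f : ℕ → ℝ) : ℝ :=
  limUnder atTop (fun N => ∑ k ∈ Finset.range N, f k)

/-- All rows of `A` applied to `y` give convergent series: `Ay` is well defined. -/
def RowsConv (A : ℕ → ℕ → ℝ) (y : ℕ → ℝ) : Prop := ∀ n, SeriesConv (fun k => A n k * y k)

/-- The sequence `Ay = (∑ₖ a_{n,k} y_k)ₙ`. -/
noncomputable def matMul (A : ℕ → ℕ → ℝ) (y : ℕ → ℝ) : ℕ → ℝ :=
  fun n => seriesSum (fun k => A n k * y k)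

/-- `y` is `I`-convergent to `η`. -/
def IConvTo (I : Set (Set ℕ)) (y : ℕ → ℝ) (η : ℝ) : Prop :=
  ∀ ε : ℝ, 0 < ε → {n | ε < |y n - η|} ∈ I

/-- `y` is `I`-convergent. -/
def IConv (I : Set (Set ℕ)) (y : ℕ → ℝ) : Prop := ∃ η : ℝ, IConvTo I y η

/-- `A` is a regular matrix: it maps convergent sequences to convergent sequences,
preserving limits. -/
def RegularMatrix (A : ℕ → ℕ → ℝ) : Prop :=
  ∀ (y : ℕ → ℝ) (l : ℝ), Tendsto y atTop (𝓝 l) →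
    RowsConv A y ∧ Tendsto (matMul A y) atTop (𝓝 l)

/-- `A` is `(Fin, I)`-regular: it maps bounded convergent sequences to bounded
`I`-convergent sequences, preserving the limit. -/
def FinIRegular (I : Set (Set ℕ)) (A : ℕ → ℕ → ℝ) : Prop :=
  ∀ y : ℕ → ℝ, Bdd y → ∀ l : ℝ, Tendsto y atTop (𝓝 l) →
    RowsConv A y ∧ Bdd (matMul A y) ∧ IConvTo I (matMul A y) l

/-- `S ⊆ ℕ` has asymptotic density zero. -/
noncomputable def DensityZero (S : Set ℕ) : Prop :=
  Tendsto (fun n : ℕ =>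
      (((Finset.range (n + 1)).filter (fun m => @decide (m ∈ S) (Classical.dec _) = true)).card : ℝ) / n)
    atTop (𝓝 0)

/-- `y` is statistically convergent. -/
noncomputable def StatConv (y : ℕ → ℝ) : Prop :=
  ∃ η : ℝ, ∀ ε : ℝ, 0 < ε → DensityZero {n | ε < |y n - η|}

/-- The ideal Fin × Fin, represented as an ideal on ℕ via the 2-adic valuation. -/
def FinTimesFin : Set (Set ℕ) :=
  {S | ∀ᶠ k in atTop, {n ∈ S | padicValNat 2 n = k}.Finite}

/-- `I` contains an isomorphic copy of `J`. -/
def ContainsIsoCopy (I J : Set (Set ℕ)) : Prop :=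
  ∃ ι : ℕ → ℕ, Function.Injective ι ∧ ∀ S : Set ℕ, S ∈ J ↔ ι ⁻¹' S ∈ I

/-- A family of subsets of ℕ is Borel (as a subset of the Cantor space `ℕ → Bool`). -/
def BorelFamily (𝒜 : Set (Set ℕ)) : Prop := @MeasurableSet (ℕ → Bool) (borel (ℕ → Bool)) (chi '' 𝒜)

/-- A family of subsets of ℕ is meager (as a subset of the Cantor space `ℕ → Bool`). -/
def MeagerFamily (𝒜 : Set (Set ℕ)) : Prop := IsMeagre (chi '' 𝒜)

/-- An F_σ subset of the Cantor space. -/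
def IsFSigma (K : Set (ℕ → Bool)) : Prop :=
  ∃ F : ℕ → Set (ℕ → Bool), (∀ n, IsClosed (F n)) ∧ K = ⋃ n, F n

/-- A family of subsets of ℕ is F_{σδ} (as a subset of the Cantor space). -/
def FSigmaDeltaFamily (𝒜 : Set (Set ℕ)) : Prop :=
  ∃ F : ℕ → ℕ → Set (ℕ → Bool), (∀ i j, IsClosed (F i j)) ∧ chi '' 𝒜 = ⋂ i, ⋃ j, F i j

/-- The space Σ of strictly increasing functions ℕ → ℕ, as a subspace of ℕ^ℕ. -/
abbrev MonoSeq : Type := {σ : ℕ → ℕ // StrictMono σ}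

/-- The set Σ_{x,A}(I) of those σ ∈ Σ for which A σ(x) is well defined and I-convergent. -/
noncomputable def SigmaSet (x : ℕ → ℝ) (A : ℕ → ℕ → ℝ) (I : Set (Set ℕ)) : Set MonoSeq :=
  {σ | RowsConv A (fun k => x (σ.1 k)) ∧ IConv I (matMul A (fun k => x (σ.1 k)))}

/-- `I*` is ω-diagonalizable by `I*`-universal sets. -/
def OmegaDiagonalizable (I : Set (Set ℕ)) : Prop :=
  ∃ F : ℕ → ℕ → Set ℕ,
    (∀ n k, (F n k).Finite ∧ (F n k).Nonempty) ∧
    (∀ n, ∀ A ∈ dualFilter I, ∃ k, F n k ⊆ A) ∧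
    (∀ A ∈ dualFilter I, ∃ n m, ∀ k, m < k → (F n k ∩ A).Nonempty)

/-- `y` is `I`-bounded. -/
def IBounded (I : Set (Set ℕ)) (y : ℕ → ℝ) : Prop := ∃ m : ℕ, {n | (m : ℝ) ≤ |y n|} ∈ I

/-- The metric d(σ₁,σ₂) = ∑_{i ∈ Im σ₁ Δ Im σ₂} 2^{-i} on Σ. -/
noncomputable def dSigma (σ₁ σ₂ : MonoSeq) : ℝ :=
  ∑' i : ℕ, Set.indicator (symmDiff (Set.range σ₁.1) (Set.range σ₂.1)) (fun i => (2 : ℝ)⁻¹ ^ i) i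


/-!
Suppose every `{0,1}`-sequence `x` had `Ax` well defined and statistically convergent. Testing
against the indicators of the positive and negative entries of a row shows that the rows are
absolutely summable, so each `x ↦ (Ax)ₘ` is continuous on the Cantor space `ℕ → Bool`. The sets
of `x` for which at most half of `m ≤ n` have `|(Ax)ₘ - q| > 1/4`, for all `n ≥ N`, are closed,
and over `q ∈ ℚ`, `N ∈ ℕ` they cover the Cantor space. By Baire one of them contains a cylinder,
and the cylinder contains an eventually constant `x` whose limit `v ∈ {0,1}` has `|v - q| ≥ 1/2`.
By regularity `(Ax)ₘ → v`, so `|(Ax)ₘ - q| > 1/4` for all large `m`, a contradiction.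
-/

/-- The number of `m ≤ n` in `S`, written exactly as in `DensityZero`. -/
noncomputable def densityCount (S : Set ℕ) (n : ℕ) : ℕ :=
  ((Finset.range (n + 1)).filter (fun m => @decide (m ∈ S) (Classical.dec _) = true)).card

lemma densityCount_eq_sum (S : Set ℕ) (n : ℕ) :
    (densityCount S n : ℝ) = ∑ m ∈ Finset.range (n + 1), S.indicator (fun _ => (1 : ℝ)) m := by
  rw [densityCount, Finset.natCast_card_filter]
  refine Finset.sum_congr rfl fun m _ => ?_
  by_cases h : m ∈ S <;> simp [h]

lemma densityCount_mono {S T : Set ℕ} (hST : S ⊆ T) (n : ℕ) :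
    densityCount S n ≤ densityCount T n :=
  Finset.card_le_card fun m hm => by
    simp only [Finset.mem_filter, decide_eq_true_eq] at hm ⊢
    exact ⟨hm.1, hST hm.2⟩

lemma DensityZero.eventually_densityCount_le {S : Set ℕ} (hS : DensityZero S) {c : ℝ}
    (hc : 0 < c) : ∀ᶠ n in atTop, (densityCount S n : ℝ) ≤ c * n := by
  have hS' : Tendsto (fun n => (densityCount S n : ℝ) / n) atTop (𝓝 0) := hS
  filter_upwards [hS'.eventually_le_const hc, eventually_gt_atTop 0] with n hn hpos
  rwa [div_le_iff₀ (by exact_mod_cast hpos)] at hn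

lemma eventually_lt_densityCount {S : Set ℕ} (hS : ∀ᶠ m in atTop, m ∈ S) {c : ℝ} (hc : c < 1) :
    ∀ᶠ n in atTop, c * n < densityCount S n := by
  obtain ⟨M, hM⟩ := eventually_atTop.1 hS
  have hcount : ∀ n : ℕ, (n + 1 - M : ℝ) ≤ densityCount S n := by
    intro n
    have hsub : Finset.range (n + 1) \ Finset.range M ⊆
        (Finset.range (n + 1)).filter (fun m => @decide (m ∈ S) (Classical.dec _) = true) := by
      intro m hm
      simp only [Finset.mem_sdiff, Finset.mem_range, not_lt, Finset.mem_filter,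
        decide_eq_true_eq] at hm ⊢
      exact ⟨hm.1, hM m hm.2⟩
    have h : n + 1 ≤ densityCount S n + M := by
      have := (Finset.card_le_card_sdiff_add_card (s := Finset.range (n + 1))
        (t := Finset.range M)).trans (Nat.add_le_add_right (Finset.card_le_card hsub) _)
      rwa [Finset.card_range, Finset.card_range] at this
    rw [sub_le_iff_le_add]
    exact_mod_cast h
  have hlin : Tendsto (fun n : ℕ => (1 - c) * n + (1 - M : ℝ)) atTop atTop :=
    tendsto_atTop_add_const_right _ _
      (tendsto_natCast_atTop_atTop.const_mul_atTop (sub_pos.2 hc))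
  filter_upwards [hlin.eventually_gt_atTop 0] with n hn
  linarith [hcount n]

lemma isClosed_setOf_densityCount_le {X : Type*} [TopologicalSpace X] {U : ℕ → Set X}
    (hU : ∀ m, IsOpen (U m)) (n : ℕ) (c : ℝ) :
    IsClosed {x | (densityCount {m | x ∈ U m} n : ℝ) ≤ c} := by
  simp only [densityCount_eq_sum]
  exact (lowerSemicontinuous_sum fun m _ =>
    (hU m).lowerSemicontinuous_indicator zero_le_one).isClosed_preimage c

lemma SeriesConv.sub {f g : ℕ → ℝ} (hf : SeriesConv f) (hg : SeriesConv g) :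
    SeriesConv (fun k => f k - g k) := by
  obtain ⟨a, ha⟩ := hf
  obtain ⟨b, hb⟩ := hg
  exact ⟨a - b, by simpa [Finset.sum_sub_distrib] using ha.sub hb⟩

lemma SeriesConv.summable_of_nonneg {f : ℕ → ℝ} (h : SeriesConv f) (hf : ∀ k, 0 ≤ f k) :
    Summable f := by
  obtain ⟨l, hl⟩ := h
  have hmono : Monotone (fun N => ∑ k ∈ Finset.range N, f k) := fun a b hab =>
    Finset.sum_le_sum_of_subset_of_nonneg (Finset.range_subset_range.2 hab) fun i _ _ => hf i
  exact summable_of_sum_range_le hf fun n => hmono.ge_of_tendsto hl n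

lemma matMul_eq_tsum {A : ℕ → ℕ → ℝ} {y : ℕ → ℝ} {n : ℕ} (h : Summable fun k => A n k * y k) :
    matMul A y n = ∑' k, A n k * y k :=
  h.hasSum.tendsto_sum_nat.limUnder_eq

lemma summable_abs_of_forall_seriesConv {f : ℕ → ℝ}
    (h : ∀ x : ℕ → ℝ, (∀ k, x k = 0 ∨ x k = 1) → SeriesConv fun k => f k * x k) :
    Summable fun k => |f k| := by
  have hpos := h (fun k => if 0 < f k then 1 else 0) fun k => by split_ifs <;> simp
  have hneg := h (fun k => if f k < 0 then 1 else 0) fun k => by split_ifs <;> simp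
  have heq : ∀ k, f k * (if 0 < f k then 1 else 0) - f k * (if f k < 0 then 1 else 0) = |f k| := by
    intro k
    rcases lt_trichotomy (f k) 0 with hk | hk | hk
    · simp [hk, hk.not_gt, abs_of_neg hk]
    · simp [hk]
    · simp [hk, hk.not_gt, abs_of_pos hk]
  simpa only [heq] using (hpos.sub hneg).summable_of_nonneg fun k => by
    rw [heq]
    exact abs_nonneg _

lemma norm_mul_toNat_le (r : ℝ) (b : Bool) : ‖r * (b.toNat : ℝ)‖ ≤ |r| := by
  cases b <;> simp

lemma continuous_tsum_mul_toNat {f : ℕ → ℝ} (hf : Summable fun k => |f k|) :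
    Continuous fun x : ℕ → Bool => ∑' k, f k * ((x k).toNat : ℝ) :=
  continuous_tsum (fun k => continuous_const.mul
    ((continuous_of_discreteTopology (f := fun b : Bool => (b.toNat : ℝ))).comp
      (continuous_apply k))) hf fun _ _ => norm_mul_toNat_le _ _

lemma exists_isOpen_densityCount_le {X : Type*} [TopologicalSpace X] [BaireSpace X]
    [Nonempty X] {f : ℕ → X → ℝ} (hf : ∀ m, Continuous (f m))
    (hstat : ∀ x, StatConv fun m => f m x) {ε c : ℝ} (hε : 0 < ε) (hc : 0 < c) :
    ∃ V : Set X, IsOpen V ∧ V.Nonempty ∧ ∃ (q : ℝ) (N : ℕ), ∀ x ∈ V, ∀ n ≥ N,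
      (densityCount {m | ε < |f m x - q|} n : ℝ) ≤ c * n := by
  set F : ℚ × ℕ → Set X :=
    fun p => {x | ∀ n ≥ p.2, (densityCount {m | ε < |f m x - p.1|} n : ℝ) ≤ c * n}
  have hclosed : ∀ p, IsClosed (F p) := fun p => by
    simp only [F, Set.ofPred_forall]
    exact isClosed_iInter fun n => isClosed_iInter fun _ => isClosed_setOf_densityCount_le
      (fun m => isOpen_lt continuous_const ((hf m).sub continuous_const).abs) n _
  have hcover : ⋃ p, F p = Set.univ := by
    refine Set.eq_univ_of_forall fun x => ?_
    obtain ⟨η, hη⟩ := hstat x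
    obtain ⟨q, hq⟩ := exists_rat_near η (half_pos hε)
    obtain ⟨N, hN⟩ := eventually_atTop.1 ((hη _ (half_pos hε)).eventually_densityCount_le hc)
    refine Set.mem_iUnion.2 ⟨(q, N), fun n hn => ?_⟩
    refine (Nat.cast_le.2 (densityCount_mono (fun m hm => ?_) n)).trans (hN n hn)
    have := abs_sub_le (f m x) η q
    simp only [Set.mem_ofPred_eq] at hm ⊢
    linarith
  obtain ⟨p, hp⟩ := nonempty_interior_of_iUnion_of_closed hclosed hcover
  exact ⟨interior (F p), isOpen_interior, hp, p.1, p.2, fun x hx => interior_subset hx⟩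

lemma exists_mem_eventually_eq_of_isOpen {ι α : Type*} [TopologicalSpace α] {V : Set (ι → α)}
    (hV : IsOpen V) (hne : V.Nonempty) (a : α) : ∃ y ∈ V, ∀ᶠ i in cofinite, y i = a := by
  classical
  obtain ⟨x, hx⟩ := hne
  obtain ⟨I, u, hIu, hsub⟩ := isOpen_pi_iff.1 hV x hx
  refine ⟨fun i => if i ∈ I then x i else a, hsub fun i hi => ?_, ?_⟩
  · simpa [Finset.mem_coe.1 hi] using (hIu i hi).2
  · refine eventually_cofinite.2 (I.finite_toSet.subset fun i hi => ?_)
    by_contra hiI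
    exact hi (if_neg hiI)

lemma exists_half_le_abs_toNat_sub (q : ℝ) : ∃ b : Bool, 1 / 2 ≤ |(b.toNat : ℝ) - q| := by
  by_cases hq : q ≤ 1 / 2
  · exact ⟨true, by rw [abs_of_nonneg] <;> simp <;> linarith⟩
  · exact ⟨false, by rw [abs_of_neg] <;> simp <;> linarith⟩

/-- For every regular matrix `A` there is a {0,1}-valued sequence `x`
such that `Ax` is not well defined or not statistically convergent. -/
theorem stmt_2 (A : ℕ → ℕ → ℝ) (hA : RegularMatrix A) :
    ∃ x : ℕ → ℝ, (∀ n, x n = 0 ∨ x n = 1) ∧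
      ¬ (RowsConv A x ∧ StatConv (matMul A x)) := by
  by_contra! h
  have hbool : ∀ (x : ℕ → Bool) k, ((x k).toNat : ℝ) = 0 ∨ ((x k).toNat : ℝ) = 1 :=
    fun x k => by cases x k <;> simp
  have hrow : ∀ m, Summable fun k => |A m k| :=
    fun m => summable_abs_of_forall_seriesConv fun x hx => (h x hx).1 m
  set f : ℕ → (ℕ → Bool) → ℝ := fun m x => matMul A (fun k => ((x k).toNat : ℝ)) m
  have hcont : ∀ m, Continuous (f m) := fun m =>
    (continuous_tsum_mul_toNat (hrow m)).congr fun x =>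
      (matMul_eq_tsum ((hrow m).of_norm_bounded fun k => norm_mul_toNat_le _ _)).symm
  obtain ⟨V, hVo, hVne, q, N, hV⟩ := exists_isOpen_densityCount_le hcont
    (fun x => (h _ (hbool x)).2) (ε := 1 / 4) (c := 1 / 2) (by norm_num) (by norm_num)
  obtain ⟨b, hb⟩ := exists_half_le_abs_toNat_sub q
  obtain ⟨y, hyV, hy⟩ := exists_mem_eventually_eq_of_isOpen hVo hVne b
  have hlim : Tendsto (fun m => f m y) atTop (𝓝 (b.toNat : ℝ)) :=
    (hA _ _ (tendsto_const_nhds.congr' ((Nat.cofinite_eq_atTop ▸ hy).mono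
      fun k hk => by simp [hk]))).2
  have hfar : ∀ᶠ m in atTop, m ∈ {m | 1 / 4 < |f m y - q|} := by
    filter_upwards [Metric.tendsto_nhds.1 hlim _ (by norm_num : (0 : ℝ) < 1 / 4)] with m hm
    rw [Real.dist_eq, abs_sub_comm] at hm
    linarith [abs_sub_le (b.toNat : ℝ) (f m y) q]
  obtain ⟨n, hn, hnN⟩ :=
    ((eventually_lt_densityCount hfar (by norm_num : (1 / 2 : ℝ) < 1)).and
      (eventually_ge_atTop N)).exists
  exact (hV y hyV n hnN).not_gt hn
end

section
/- Let x be a divergent real sequence and A be a regular infinite real matrix. Then the set Σ_{x,A} = {σ ∈ Σ : Aσ(x) is well defined and convergent} is meager in Σ. -/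
open Filter Topology

/-!
A cylinder of Σ fixes only finitely many terms of σ, so it can be continued by any tail we
like. If `x` is bounded it has two cluster points `p < q`; continuing by subsequences of `x`
tending to `p`, resp. `q`, makes some late term of `Aσ(x)` close to `p`, resp. `q`, and since
the rows of a regular matrix are absolutely summable this persists on a whole subcylinder.
Hence the σ for which `Aσ(x)` oscillates by at most `(q - p) / 3` beyond index `m` form a
nowhere dense set. If `x` is unbounded, inserting a single huge value of `x` breaks either the
convergence of an infinitely supported row of `A` or, when all rows are finitely supported,
any given bound on `Aσ(x)`.
-/

lemma seriesSum_eq_of_hasSum {f : ℕ → ℝ} {s : ℝ} (h : HasSum f s) : seriesSum f = s :=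
  h.tendsto_sum_nat.limUnder_eq

lemma SeriesConv.tendsto_zero {f : ℕ → ℝ} (h : SeriesConv f) : Tendsto f atTop (𝓝 0) := by
  obtain ⟨l, hl⟩ := h
  have hdiff := (hl.comp (tendsto_add_atTop_nat 1)).sub hl
  rw [sub_self] at hdiff
  refine hdiff.congr fun N => ?_
  simp [Finset.sum_range_succ]

/-- If `∑ |a k| = ∞`, the null sequence `y k = sign (a k) / (1 + ∑_{j ≤ k} |a j|)` makes
`∑ a k * y k` diverge (Abel–Dini). -/
lemma summable_abs_of_forall_seriesConv_mul {a : ℕ → ℝ}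
    (h : ∀ y : ℕ → ℝ, Tendsto y atTop (𝓝 0) → SeriesConv fun k => a k * y k) :
    Summable fun k => |a k| := by
  by_contra hdiv
  set S : ℕ → ℝ := fun N => ∑ k ∈ Finset.range N, |a k|
  have hS : Tendsto S atTop atTop :=
    (not_summable_iff_tendsto_nat_atTop_of_nonneg fun k => abs_nonneg _).1 hdiv
  have hS_nonneg : ∀ N, 0 ≤ S N := fun N => Finset.sum_nonneg fun k _ => abs_nonneg _
  have hS_mono : Monotone S := fun N M hNM =>
    Finset.sum_le_sum_of_subset_of_nonneg (Finset.range_subset_range.2 hNM)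
      fun k _ _ => abs_nonneg _
  have hS_inv : Tendsto (fun k => (1 + S (k + 1))⁻¹) atTop (𝓝 0) :=
    (tendsto_atTop_add_const_left _ 1 (hS.comp (tendsto_add_atTop_nat 1))).inv_tendsto_atTop
  set y : ℕ → ℝ := fun k => SignType.sign (a k) * (1 + S (k + 1))⁻¹
  have hy : Tendsto y atTop (𝓝 0) := by
    refine squeeze_zero_norm (fun k => ?_) hS_inv
    rw [norm_mul, Real.norm_eq_abs, Real.norm_eq_abs, abs_inv,
      abs_of_pos (by linarith [hS_nonneg (k + 1)] : (0 : ℝ) < 1 + S (k + 1))]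
    refine mul_le_of_le_one_left (by positivity) ?_
    rcases lt_trichotomy (a k) 0 with hk | hk | hk <;> simp [hk]
  obtain ⟨l, hl⟩ := h y hy
  set T : ℕ → ℝ := fun N => ∑ k ∈ Finset.range N, a k * y k
  have hkey : ∀ N M, N ≤ M → T N + (1 - (1 + S N) / (1 + S M)) ≤ T M := by
    intro N M hNM
    have hM : 0 < 1 + S M := by linarith [hS_nonneg M]
    have hblock : (S M - S N) / (1 + S M) ≤ T M - T N := by
      rw [Finset.sum_Ico_eq_sub _ hNM |>.symm, Finset.sum_Ico_eq_sub _ hNM |>.symm,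
        Finset.sum_div]
      refine Finset.sum_le_sum fun k hk => ?_
      rw [Finset.mem_Ico] at hk
      rw [← mul_assoc, self_mul_sign, ← div_eq_mul_inv]
      exact div_le_div_of_nonneg_left (abs_nonneg _) (by linarith [hS_nonneg (k + 1)])
        (by linarith [hS_mono (show k + 1 ≤ M by omega)])
    have : 1 - (1 + S N) / (1 + S M) = (S M - S N) / (1 + S M) := by field_simp; ring
    linarith
  have hgap : ∀ N, T N + 1 ≤ l := fun N =>
    le_of_tendsto_of_tendsto (by
        simpa using tendsto_const_nhds.add (tendsto_const_nhds.sub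
          (tendsto_const_nhds.div_atTop (tendsto_atTop_add_const_left _ 1 hS))))
      hl (eventually_atTop.2 ⟨N, hkey N⟩)
  linarith [le_of_tendsto (hl.add_const 1) (Eventually.of_forall hgap)]

section RegularMatrix

variable {A : ℕ → ℕ → ℝ}

lemma matMul_eq_sum_range {y : ℕ → ℝ} {n K : ℕ} (h : ∀ k, K ≤ k → A n k = 0) :
    matMul A y n = ∑ k ∈ Finset.range K, A n k * y k :=
  seriesSum_eq_of_hasSum <| hasSum_sum_of_ne_finset_zero fun k hk => by
    rw [h k (by simpa using hk), zero_mul]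

lemma RegularMatrix.tendsto_column (hA : RegularMatrix A) (k : ℕ) :
    Tendsto (fun n => A n k) atTop (𝓝 0) := by
  have hy : Tendsto (fun j => if j = k then (1 : ℝ) else 0) atTop (𝓝 0) :=
    tendsto_const_nhds.congr' <| (eventually_gt_atTop k).mono fun j hj => by simp [hj.ne']
  refine (hA _ 0 hy).2.congr fun n => seriesSum_eq_of_hasSum ?_
  convert hasSum_ite_eq k (A n k) using 2 with j
  split_ifs with hj <;> simp [hj]

lemma RegularMatrix.exists_ne_zero (hA : RegularMatrix A) (K : ℕ) :
    ∃ n k, K ≤ k ∧ A n k ≠ 0 := by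
  by_contra! h
  have hsum : Tendsto (fun n => ∑ k ∈ Finset.range K, A n k * 1) atTop (𝓝 0) := by
    simpa using tendsto_finsetSum _ fun k _ => hA.tendsto_column k
  have hone := (hA (fun _ => 1) 1 tendsto_const_nhds).2
  exact one_ne_zero <| tendsto_nhds_unique (hone.congr fun n => matMul_eq_sum_range (h n)) hsum

lemma RegularMatrix.summable_abs_row (hA : RegularMatrix A) (n : ℕ) :
    Summable fun k => |A n k| :=
  summable_abs_of_forall_seriesConv_mul fun y hy => (hA y 0 hy).1 n

lemma RegularMatrix.summable_row_mul (hA : RegularMatrix A) {y : ℕ → ℝ} {M : ℝ}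
    (hy : ∀ k, |y k| ≤ M) (n : ℕ) : Summable fun k => A n k * y k :=
  ((hA.summable_abs_row n).mul_right M).of_norm_bounded fun k => by
    rw [Real.norm_eq_abs, abs_mul]
    exact mul_le_mul_of_nonneg_left (hy k) (abs_nonneg _)

lemma RegularMatrix.abs_matMul_sub_le (hA : RegularMatrix A) {y z : ℕ → ℝ} {M : ℝ}
    (hy : ∀ k, |y k| ≤ M) (hz : ∀ k, |z k| ≤ M) {K : ℕ} (hyz : ∀ k < K, y k = z k) (n : ℕ) :
    |matMul A y n - matMul A z n| ≤ 2 * M * ∑' j, |A n (j + K)| := by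
  have hy' := hA.summable_row_mul hy n
  have hz' := hA.summable_row_mul hz n
  have hd := hy'.sub hz'
  have hd_head : ∑ k ∈ Finset.range K, (A n k * y k - A n k * z k) = 0 :=
    Finset.sum_eq_zero fun k hk => by rw [hyz k (Finset.mem_range.1 hk), sub_self]
  have hbound : ∀ j, ‖A n (j + K) * y (j + K) - A n (j + K) * z (j + K)‖
      ≤ 2 * M * |A n (j + K)| := fun j => by
    rw [Real.norm_eq_abs, ← mul_sub, abs_mul, mul_comm]
    gcongr
    linarith [abs_sub (y (j + K)) (z (j + K)), hy (j + K), hz (j + K)]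
  have htail : Summable fun j => 2 * M * |A n (j + K)| :=
    ((summable_nat_add_iff K).2 (hA.summable_abs_row n)).mul_left _
  calc |matMul A y n - matMul A z n|
      = ‖∑' j, (A n (j + K) * y (j + K) - A n (j + K) * z (j + K))‖ := by
        rw [matMul, matMul, seriesSum_eq_of_hasSum hy'.hasSum, seriesSum_eq_of_hasSum hz'.hasSum,
          ← hy'.tsum_sub hz', ← hd.sum_add_tsum_nat_add K, hd_head, zero_add, Real.norm_eq_abs]
    _ ≤ ∑' j, 2 * M * |A n (j + K)| := tsum_of_norm_bounded htail.hasSum hbound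
    _ = 2 * M * ∑' j, |A n (j + K)| := tsum_mul_left

end RegularMatrix

namespace MonoSeq

def cylinder (τ : MonoSeq) (K : ℕ) : Set MonoSeq := Subtype.val ⁻¹' PiNat.cylinder τ.1 K

lemma self_mem_cylinder (τ : MonoSeq) (K : ℕ) : τ ∈ cylinder τ K := fun _ _ => rfl

lemma isOpen_cylinder (τ : MonoSeq) (K : ℕ) : IsOpen (cylinder τ K) :=
  (PiNat.isOpen_cylinder (E := fun _ => ℕ) τ.1 K).preimage continuous_subtype_val

lemma cylinder_subset_of_mem {σ τ : MonoSeq} {K K' : ℕ} (hτ : τ ∈ cylinder σ K) (hK : K ≤ K') :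
    cylinder τ K' ⊆ cylinder σ K := fun ρ hρ i hi => (hρ i (by omega)).trans (hτ i hi)

lemma cylinder_anti (τ : MonoSeq) {K K' : ℕ} (hK : K ≤ K') : cylinder τ K' ⊆ cylinder τ K :=
  cylinder_subset_of_mem (self_mem_cylinder τ K) hK

lemma exists_cylinder_subset {U : Set MonoSeq} (hU : IsOpen U) {σ : MonoSeq} (hσ : σ ∈ U) :
    ∃ K, cylinder σ K ⊆ U := by
  obtain ⟨V, hV, rfl⟩ := isOpen_induced_iff.1 hU
  obtain ⟨_, ⟨τ, K, rfl⟩, hστ, hsub⟩ :=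
    (PiNat.isTopologicalBasis_cylinders fun _ => ℕ).exists_subset_of_mem_open hσ hV
  exact ⟨K, fun ρ hρ => hsub <| (PiNat.mem_cylinder_iff_eq.1 hστ) ▸ hρ⟩

lemma isNowhereDense_of_forall_cylinder {S : Set MonoSeq}
    (h : ∀ σ K, ∃ τ ∈ cylinder σ K, ∃ K', ∀ ρ ∈ cylinder τ K', ρ ∉ S) : IsNowhereDense S := by
  refine Set.eq_empty_iff_forall_notMem.2 fun σ hσ => ?_
  obtain ⟨K, hK⟩ := exists_cylinder_subset isOpen_interior hσ
  obtain ⟨τ, hτ, K', hτS⟩ := h σ K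
  obtain ⟨ρ, hρ, hρS⟩ := mem_closure_iff.1 (interior_subset (hK hτ)) _ (isOpen_cylinder τ K')
    (self_mem_cylinder τ K')
  exact hτS ρ hρ hρS

lemma exists_mem_cylinder_add_eq (σ : MonoSeq) (K : ℕ) {g : ℕ → ℕ} (hg : StrictMono g)
    (hσg : σ.1 K ≤ g 0) : ∃ τ ∈ cylinder σ K, ∀ j, τ.1 (j + K) = g j := by
  let τ : ℕ → ℕ := fun i => if i < K then σ.1 i else g (i - K)
  have hτ : StrictMono τ := strictMono_nat_of_lt_succ fun i => by
    by_cases hi : i + 1 < K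
    · simp only [τ, hi, show i < K by omega, if_true]; exact σ.2 (Nat.lt_succ_self i)
    by_cases hi' : i < K
    · simp only [τ, hi, hi', if_true, if_false, show i + 1 - K = 0 by omega]
      exact (σ.2 (show i < K by omega)).trans_le hσg
    · simp only [τ, hi, hi', if_false]; exact hg (by omega)
  exact ⟨⟨τ, hτ⟩, fun i hi => if_pos hi, fun j => by simp [τ]⟩

lemma exists_mem_cylinder_apply_eq (σ : MonoSeq) (K : ℕ) {v : ℕ} (hv : σ.1 K ≤ v) :
    ∃ τ ∈ cylinder σ K, τ.1 K = v := by
  obtain ⟨τ, hτ, hτv⟩ := exists_mem_cylinder_add_eq σ K (g := (v + ·)) (strictMono_id.const_add v)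
    (by simpa using hv)
  exact ⟨τ, hτ, by simpa using hτv 0⟩

end MonoSeq

def convergentSubseqSet (x : ℕ → ℝ) (A : ℕ → ℕ → ℝ) : Set MonoSeq :=
  {σ | RowsConv A (fun k => x (σ.1 k)) ∧
    ∃ l : ℝ, Tendsto (matMul A (fun k => x (σ.1 k))) atTop (𝓝 l)}

lemma exists_mapClusterPt_lt {x : ℕ → ℝ} {M : ℝ} (hM : ∀ v, |x v| ≤ M)
    (hx : ¬∃ l, Tendsto x atTop (𝓝 l)) :
    ∃ p q, p < q ∧ MapClusterPt p atTop x ∧ MapClusterPt q atTop x := by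
  have hmem : ∀ᶠ v in atTop, x v ∈ Set.Icc (-M) M := Eventually.of_forall fun v => abs_le.1 (hM v)
  obtain ⟨p, -, hp⟩ := isCompact_Icc.exists_mapClusterPt (tendsto_principal.2 hmem)
  by_contra! h
  refine hx ⟨p, isCompact_Icc.tendsto_nhds_of_unique_mapClusterPt hmem fun q _ hq => ?_⟩
  rcases lt_trichotomy p q with hpq | rfl | hqp
  exacts [absurd hq (h p q hpq hp), rfl, absurd hp (h q p hqp hq)]

lemma RegularMatrix.exists_cylinder_abs_matMul_sub_lt {A : ℕ → ℕ → ℝ} (hA : RegularMatrix A)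
    {x : ℕ → ℝ} {M : ℝ} (hM : ∀ v, |x v| ≤ M) {ℓ : ℝ} (hℓ : MapClusterPt ℓ atTop x)
    (σ : MonoSeq) (K m : ℕ) {ε : ℝ} (hε : 0 < ε) :
    ∃ τ ∈ MonoSeq.cylinder σ K, ∃ n, m ≤ n ∧ ∃ K', K ≤ K' ∧ ∀ ρ ∈ MonoSeq.cylinder τ K',
      |matMul A (fun k => x (ρ.1 k)) n - ℓ| < ε := by
  obtain ⟨φ, hφ, hφℓ⟩ := hℓ.tendsto_subseq
  obtain ⟨c, hc⟩ : ∃ c, σ.1 K ≤ φ c := ⟨σ.1 K, hφ.le_apply⟩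
  obtain ⟨τ, hτ, hτφ⟩ := MonoSeq.exists_mem_cylinder_add_eq σ K
    (g := fun j => φ (j + c)) (hφ.comp (strictMono_id.add_const c)) (by simpa using hc)
  have hxτ : Tendsto (fun k => x (τ.1 k)) atTop (𝓝 ℓ) := by
    rw [← tendsto_add_atTop_iff_nat K]
    simp only [hτφ]
    exact (tendsto_add_atTop_iff_nat c).2 hφℓ
  obtain ⟨n, hn, hmn⟩ := (((hA _ ℓ hxτ).2.eventually
    (Metric.ball_mem_nhds ℓ (half_pos hε))).and (eventually_ge_atTop m)).exists
  have htail : Tendsto (fun K' => 2 * M * ∑' j, |A n (j + K')|) atTop (𝓝 0) := by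
    simpa using (tendsto_sum_nat_add fun k => |A n k|).const_mul (2 * M)
  obtain ⟨K', hK', hKK'⟩ :=
    ((htail.eventually (gt_mem_nhds (half_pos hε))).and (eventually_ge_atTop K)).exists
  refine ⟨τ, hτ, n, hmn, K', hKK', fun ρ hρ => ?_⟩
  have hρτ := hA.abs_matMul_sub_le (fun k => hM (ρ.1 k)) (fun k => hM (τ.1 k))
    (fun k hk => congrArg x (hρ k hk)) n
  rw [Real.dist_eq] at hn
  linarith [abs_sub_le (matMul A (fun k => x (ρ.1 k)) n) (matMul A (fun k => x (τ.1 k)) n) ℓ]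

lemma isMeagre_convergentSubseqSet_of_bounded {x : ℕ → ℝ} {A : ℕ → ℕ → ℝ}
    (hA : RegularMatrix A) {M : ℝ} (hM : ∀ v, |x v| ≤ M) (hx : ¬∃ l, Tendsto x atTop (𝓝 l)) :
    IsMeagre (convergentSubseqSet x A) := by
  obtain ⟨p, q, hpq, hp, hq⟩ := exists_mapClusterPt_lt hM hx
  set ε := (q - p) / 3
  have hε : 0 < ε := by positivity
  set T : ℕ → Set MonoSeq := fun m => {σ | ∀ n ≥ m, ∀ n' ≥ m,
    |matMul A (fun k => x (σ.1 k)) n - matMul A (fun k => x (σ.1 k)) n'| ≤ ε}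
  have hcover : convergentSubseqSet x A ⊆ ⋃ m, T m := by
    rintro σ ⟨-, l, hl⟩
    obtain ⟨m, hm⟩ := Metric.cauchySeq_iff.1 hl.cauchySeq ε hε
    exact Set.mem_iUnion.2 ⟨m, fun n hn n' hn' => (hm n hn n' hn').le⟩
  have hT : ∀ m, IsNowhereDense (T m) := fun m =>
    MonoSeq.isNowhereDense_of_forall_cylinder fun σ K => by
      obtain ⟨τ₁, hτ₁, n, hn, K₁, hKK₁, hK₁⟩ := hA.exists_cylinder_abs_matMul_sub_lt hM hp σ K m hε
      obtain ⟨τ₂, hτ₂, n', hn', K₂, hK₁K₂, hK₂⟩ :=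
        hA.exists_cylinder_abs_matMul_sub_lt hM hq τ₁ K₁ m hε
      refine ⟨τ₂, MonoSeq.cylinder_subset_of_mem hτ₁ hKK₁ hτ₂, K₂, fun ρ hρ hρT => ?_⟩
      have h₁ := hK₁ ρ (MonoSeq.cylinder_subset_of_mem hτ₂ hK₁K₂ hρ)
      have h₂ := hK₂ ρ hρ
      have h₃ := hρT n hn n' hn'
      have hqp : q - p = 3 * ε := by ring
      rw [abs_lt] at h₁ h₂
      rw [abs_le] at h₃
      linarith
  exact (isMeagre_iUnion fun m => (hT m).isMeagre).mono hcover

lemma frequently_lt_abs_of_not_bounded {x : ℕ → ℝ} (hx : ¬∃ M, ∀ v, |x v| ≤ M) (R : ℝ) :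
    ∃ᶠ v in atTop, R < |x v| := by
  by_contra h
  simp only [not_frequently, not_lt] at h
  obtain ⟨M, hM⟩ := (isBoundedUnder_of_eventually_le h).bddAbove_range
  exact hx ⟨M, fun v => hM ⟨v, rfl⟩⟩

lemma isMeagre_convergentSubseqSet_of_infinite_row {x : ℕ → ℝ} {A : ℕ → ℕ → ℝ}
    (hx : ∀ R, ∃ᶠ v in atTop, R < |x v|) {n : ℕ} (hn : {k | A n k ≠ 0}.Infinite) :
    IsMeagre (convergentSubseqSet x A) := by
  set T : ℕ → Set MonoSeq := fun K => {σ | ∀ k ≥ K, |A n k * x (σ.1 k)| < 1}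
  have hcover : convergentSubseqSet x A ⊆ ⋃ K, T K := by
    rintro σ ⟨hrow, -⟩
    obtain ⟨K, hK⟩ := Metric.tendsto_atTop.1 (hrow n).tendsto_zero 1 one_pos
    exact Set.mem_iUnion.2 ⟨K, fun k hk => by simpa using hK k hk⟩
  have hT : ∀ K, IsNowhereDense (T K) := fun K =>
    MonoSeq.isNowhereDense_of_forall_cylinder fun σ K₀ => by
      obtain ⟨k, hk, hKk⟩ := hn.exists_gt (max K K₀)
      have hAk : 0 < |A n k| := abs_pos.2 hk
      obtain ⟨v, hv, hxv⟩ := (hx (|A n k|)⁻¹).forall_exists_of_atTop (σ.1 k)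
      obtain ⟨τ, hτ, hτv⟩ := MonoSeq.exists_mem_cylinder_apply_eq σ k hv
      refine ⟨τ, MonoSeq.cylinder_anti σ (by omega) hτ, k + 1, fun ρ hρ hρT => ?_⟩
      have hbig := hρT k (by omega)
      rw [hρ k (Nat.lt_succ_self k), hτv, abs_mul] at hbig
      rw [inv_lt_iff_one_lt_mul₀ hAk] at hxv
      linarith [mul_comm |A n k| |x v|]
  exact (isMeagre_iUnion fun K => (hT K).isMeagre).mono hcover

lemma isMeagre_convergentSubseqSet_of_finite_rows {x : ℕ → ℝ} {A : ℕ → ℕ → ℝ}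
    (hA : RegularMatrix A) (hx : ∀ R, ∃ᶠ v in atTop, R < |x v|)
    (hrows : ∀ n, {k | A n k ≠ 0}.Finite) :
    IsMeagre (convergentSubseqSet x A) := by
  set T : ℕ → Set MonoSeq := fun m => {σ | ∀ n, |matMul A (fun k => x (σ.1 k)) n| ≤ m}
  have hcover : convergentSubseqSet x A ⊆ ⋃ m, T m := by
    rintro σ ⟨-, l, hl⟩
    obtain ⟨C, hC⟩ := hl.abs.bddAbove_range
    obtain ⟨m, hm⟩ := exists_nat_ge C
    exact Set.mem_iUnion.2 ⟨m, fun n => (hC ⟨n, rfl⟩).trans hm⟩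
  have hT : ∀ m, IsNowhereDense (T m) := fun m =>
    MonoSeq.isNowhereDense_of_forall_cylinder fun σ K => by
      obtain ⟨n, k₀, hKk₀, hk₀⟩ := hA.exists_ne_zero K
      obtain ⟨k, hk, hk_max⟩ := Set.exists_max_image _ id (hrows n) ⟨k₀, hk₀⟩
      have hAk : 0 < |A n k| := abs_pos.2 hk
      have hzero : ∀ j, k + 1 ≤ j → A n j = 0 := fun j hj => by
        by_contra hj'
        exact absurd (hk_max j hj') (by simp only [id]; omega)
      set C := ∑ j ∈ Finset.range k, A n j * x (σ.1 j)
      obtain ⟨v, hv, hxv⟩ := (hx ((m + |C|) / |A n k|)).forall_exists_of_atTop (σ.1 k)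
      obtain ⟨τ, hτ, hτv⟩ := MonoSeq.exists_mem_cylinder_apply_eq σ k hv
      have hKk : K ≤ k := hKk₀.trans (hk_max k₀ hk₀)
      refine ⟨τ, MonoSeq.cylinder_anti σ hKk hτ, k + 1, fun ρ hρ hρT => ?_⟩
      have hρσ : ∀ j < k, ρ.1 j = σ.1 j := fun j hj => (hρ j (by omega)).trans (hτ j hj)
      have hval : matMul A (fun j => x (ρ.1 j)) n = C + A n k * x v := by
        rw [matMul_eq_sum_range hzero, Finset.sum_range_succ, hρ k (Nat.lt_succ_self k), hτv]
        congr 1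
        exact Finset.sum_congr rfl fun j hj => by rw [hρσ j (Finset.mem_range.1 hj)]
      have hbound := hρT n
      rw [hval] at hbound
      rw [div_lt_iff₀ hAk] at hxv
      have := abs_sub_abs_le_abs_sub (A n k * x v) (-C)
      rw [abs_mul, abs_neg, sub_neg_eq_add, add_comm] at this
      nlinarith [mul_comm |A n k| |x v|]
  exact (isMeagre_iUnion fun m => (hT m).isMeagre).mono hcover

/-- If `x` is divergent and `A` is regular, then
Σ_{x,A} = {σ ∈ Σ : Aσ(x) is well defined and convergent} is meager in Σ. -/
theorem stmt_4 (x : ℕ → ℝ) (hx : ¬ ∃ l : ℝ, Tendsto x atTop (𝓝 l))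
    (A : ℕ → ℕ → ℝ) (hA : RegularMatrix A) :
    IsMeagre {σ : MonoSeq | RowsConv A (fun k => x (σ.1 k)) ∧
      ∃ l : ℝ, Tendsto (matMul A (fun k => x (σ.1 k))) atTop (𝓝 l)} := by
  by_cases hbdd : ∃ M, ∀ v, |x v| ≤ M
  · obtain ⟨M, hM⟩ := hbdd
    exact isMeagre_convergentSubseqSet_of_bounded hA hM hx
  have hunb := frequently_lt_abs_of_not_bounded hbdd
  by_cases hrows : ∀ n, {k | A n k ≠ 0}.Finite
  · exact isMeagre_convergentSubseqSet_of_finite_rows hA hunb hrows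
  · obtain ⟨n, hn⟩ := not_forall.1 hrows
    exact isMeagre_convergentSubseqSet_of_infinite_row hunb hn
end

section
/- Let I be a Borel ideal on ℕ which does not contain an isomorphic copy of the ideal Fin×Fin. Then a real sequence x is convergent if and only if the set {σ ∈ Σ : σ(x) is I-convergent} is not meager in Σ. -/
open Filter Topology

/-!
A Borel ideal `I` is a meagre subset of the Cantor space (Jalali-Naini, Talagrand): otherwise,
being Baire measurable, it would be comeagre on some cylinder, and so would its image under the
homeomorphism flipping every bit beyond the length of the cylinder; a point in both gives two
members of `I` whose union is cofinite.

For an infinite, coinfinite `C ⊆ ℕ` the map `σ ↦ σ⁻¹(C)` from Σ to the Cantor space is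
continuous and open, so `{σ : σ⁻¹(C) ∈ I}` is meagre in Σ (for cofinite `C` it is empty).
If `σ(x)` is `I`-convergent to `η`, then `σ⁻¹{x < p} ∈ I` for `p < η` and `σ⁻¹{x > q} ∈ I` for
`q > η`. Taking `p, q` rational, the `σ` for which one of these level sets is infinite form a
meagre set; any `σ` outside it whose subsequence is `I`-convergent to `η` forces `x → η`.
-/

open Set

lemma chi_injective : Function.Injective chi := fun _ _ h =>
  Set.ext fun n => decide_eq_decide.mp (congrFun h n)

lemma mem_image_chi_iff {𝒜 : Set (Set ℕ)} {f : ℕ → Bool} :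
    f ∈ chi '' 𝒜 ↔ {k | f k = true} ∈ 𝒜 := by
  have hf : chi {k | f k = true} = f := funext fun k => by simp [chi]
  rw [← chi_injective.mem_set_image, hf]

lemma PiNat.exists_cylinder_subset {E : ℕ → Type*} [∀ n, TopologicalSpace (E n)]
    [∀ n, DiscreteTopology (E n)] {U : Set (∀ n, E n)} {x : ∀ n, E n} (hU : IsOpen U)
    (hx : x ∈ U) : ∃ n, cylinder x n ⊆ U := by
  obtain ⟨_, ⟨y, n, rfl⟩, hxy, hsub⟩ :=
    (isTopologicalBasis_cylinders E).exists_subset_of_mem_open hx hU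
  exact ⟨n, mem_cylinder_iff_eq.1 hxy ▸ hsub⟩

noncomputable def flipFrom (n : ℕ) : (ℕ → Bool) ≃ₜ (ℕ → Bool) :=
  Homeomorph.piCongrRight fun k =>
    if k < n then Homeomorph.refl Bool else Equiv.boolNot.toHomeomorphOfDiscrete

lemma flipFrom_apply (n : ℕ) (f : ℕ → Bool) (k : ℕ) :
    flipFrom n f k = if k < n then f k else !f k := by
  by_cases hk : k < n
  · simp [flipFrom, hk]
  · simp [flipFrom, hk]
    rfl

lemma exists_strictMono_extend {σ : ℕ → ℕ} (hσ : StrictMono σ) (n : ℕ) {D : ℕ → Set ℕ}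
    (hD : ∀ k, (D k).Infinite) :
    ∃ τ : ℕ → ℕ, StrictMono τ ∧ (∀ k < n, τ k = σ k) ∧ ∀ k, n ≤ k → τ k ∈ D k := by
  obtain ⟨ρ, hρ, hρD⟩ := extraction_forall_of_frequently
    (P := fun j m => m ∈ D (n + j) ∧ σ n < m) fun j => frequently_atTop'.2 fun a => by
      obtain ⟨m, hmD, hm⟩ := (hD (n + j)).exists_gt (max a (σ n))
      exact ⟨m, (le_max_left _ _).trans_lt hm, hmD, (le_max_right _ _).trans_lt hm⟩
  refine ⟨fun k => if k < n then σ k else ρ (k - n), fun a b hab => ?_, fun k hk => if_pos hk,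
    fun k hk => ?_⟩
  · dsimp only
    split_ifs with ha hb hb
    · exact hσ hab
    · exact (hσ ha).trans (hρD _).2
    · omega
    · exact hρ (by omega)
  · simpa [if_neg (not_lt.2 hk), Nat.add_sub_cancel' hk] using (hρD (k - n)).1

-- Definitionally `chi (σ.1 ⁻¹' C)`.
noncomputable def traceMap (C : Set ℕ) (σ : MonoSeq) : ℕ → Bool := chi C ∘ σ.1

lemma continuous_traceMap (C : Set ℕ) : Continuous (traceMap C) :=
  continuous_pi fun k => (continuous_of_discreteTopology (f := chi C)).comp
    ((continuous_apply k).comp continuous_subtype_val)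

lemma isOpenMap_traceMap {C : Set ℕ} (hC : C.Infinite) (hC' : Cᶜ.Infinite) :
    IsOpenMap (traceMap C) := by
  intro W hW
  rw [isOpen_iff_mem_nhds]
  rintro _ ⟨σ, hσW, rfl⟩
  obtain ⟨W', hW', rfl⟩ := isOpen_induced_iff.1 hW
  obtain ⟨n, hn⟩ := PiNat.exists_cylinder_subset hW' hσW
  refine mem_of_superset ((PiNat.isOpen_cylinder _ _ n).mem_nhds
    (PiNat.self_mem_cylinder _ n)) fun h hh => ?_
  obtain ⟨τ, hτ, hτσ, hτC⟩ := exists_strictMono_extend σ.2 n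
    (D := fun k => if h k then C else Cᶜ) fun k => by split_ifs <;> assumption
  refine ⟨⟨τ, hτ⟩, hn fun k hk => hτσ k hk, funext fun k => ?_⟩
  rcases lt_or_ge k n with hk | hk
  · simpa [traceMap, hτσ k hk] using (hh k hk).symm
  · have hτk := hτC k hk
    by_cases hb : h k <;> simp_all [traceMap, chi]

lemma isClosed_setOf_strictMono : IsClosed {f : ℕ → ℕ | StrictMono f} := by
  have : {f : ℕ → ℕ | StrictMono f} = ⋂ n, {f | f n < f (n + 1)} := by
    ext f
    simpa using ⟨fun hf n => hf n.lt_succ_self, strictMono_nat_of_lt_succ⟩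
  rw [this]
  exact isClosed_iInter fun n =>
    isClosed_le (f := fun f : ℕ → ℕ => f n + 1) (by fun_prop) (by fun_prop)

instance : PolishSpace MonoSeq := isClosed_setOf_strictMono.polishSpace

namespace IsIdeal

variable {I : Set (Set ℕ)}

lemma notMem_of_finite_compl (hI : IsIdeal I) {S : Set ℕ} (hS : Sᶜ.Finite) : S ∉ I := fun h =>
  hI.univ_not_mem <| by simpa using hI.union_mem h (hI.finite_mem hS)

theorem isMeagre_image_chi (hI : IsIdeal I) (hB : BorelFamily I) :
    IsMeagre (chi '' I) := by
  borelize (ℕ → Bool)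
  by_contra hnm
  obtain ⟨U, hU, hIU⟩ := (MeasurableSet.baireMeasurableSet hB).residualEq_isOpen
  rcases U.eq_empty_or_nonempty with rfl | ⟨g, hg⟩
  · exact hnm (eventuallyEq_empty.1 hIU)
  obtain ⟨n, hn⟩ := PiNat.exists_cylinder_subset hU hg
  have hres : ∀ᶠ f in residual _, f ∈ U → f ∈ chi '' I := hIU.mem_iff.mono fun _ h => h.2
  have hres' : ∀ᶠ f in residual _, flipFrom n f ∈ U → flipFrom n f ∈ chi '' I :=
    Tendsto.eventually (flipFrom n).residual_map_eq.le hres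
  obtain ⟨f, hfV, hf, hf'⟩ := (dense_of_mem_residual (hres.and hres')).inter_open_nonempty _
    (PiNat.isOpen_cylinder _ g n) ⟨g, PiNat.self_mem_cylinder g n⟩
  have hflipV : flipFrom n f ∈ PiNat.cylinder g n := fun i hi => by
    rw [flipFrom_apply, if_pos hi]; exact hfV i hi
  have h₁ := mem_image_chi_iff.1 (hf (hn hfV))
  have h₂ := mem_image_chi_iff.1 (hf' (hn hflipV))
  refine hI.notMem_of_finite_compl ((finite_Iio n).subset fun k hk => ?_) (hI.union_mem h₁ h₂)
  by_contra hkn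
  rw [mem_Iio, not_lt] at hkn
  simp [flipFrom_apply, hkn.not_gt] at hk

theorem isMeagre_setOf_preimage_mem (hI : IsIdeal I) (hB : BorelFamily I) {C : Set ℕ}
    (hC : C.Infinite) : IsMeagre {σ : MonoSeq | σ.1 ⁻¹' C ∈ I} := by
  by_cases hC' : Cᶜ.Finite
  · convert IsMeagre.empty
    refine eq_empty_of_forall_notMem fun σ hσ => hI.notMem_of_finite_compl ?_ hσ
    simpa using hC'.preimage σ.2.injective.injOn
  · have : {σ : MonoSeq | σ.1 ⁻¹' C ∈ I} = traceMap C ⁻¹' (chi '' I) := by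
      ext σ
      exact chi_injective.mem_set_image.symm
    rw [this]
    exact (hI.isMeagre_image_chi hB).preimage_of_isOpenMap (continuous_traceMap C)
      (isOpenMap_traceMap hC hC')

theorem isMeagre_setOf_exists_preimage_mem (hI : IsIdeal I) (hB : BorelFamily I) {ι : Type*}
    [Countable ι] (C : ι → Set ℕ) :
    IsMeagre {σ : MonoSeq | ∃ i, (C i).Infinite ∧ σ.1 ⁻¹' C i ∈ I} := by
  rw [ofPred_exists]
  refine isMeagre_iUnion fun i => ?_
  by_cases hi : (C i).Infinite
  · simpa [hi] using hI.isMeagre_setOf_preimage_mem hB hi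
  · simp [hi, IsMeagre.empty]

end IsIdeal

namespace IConvTo

variable {I : Set (Set ℕ)} {y : ℕ → ℝ} {η : ℝ}

lemma of_tendsto (hI : IsIdeal I) (hy : Tendsto y atTop (𝓝 η)) : IConvTo I y η := by
  intro ε hε
  have := hy.eventually (Metric.closedBall_mem_nhds η hε)
  rw [← Nat.cofinite_eq_atTop, eventually_cofinite] at this
  exact hI.finite_mem (by simpa [Real.dist_eq, not_le] using this)

lemma setOf_lt_mem (hI : IsIdeal I) (hy : IConvTo I y η) {p : ℝ} (hp : p < η) :
    {k | y k < p} ∈ I :=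
  hI.mem_of_subset (fun k (hk : y k < p) => by
    rw [mem_ofPred_eq, abs_sub_comm]
    linarith [le_abs_self (η - y k)]) (hy (η - p) (sub_pos.2 hp))

lemma setOf_gt_mem (hI : IsIdeal I) (hy : IConvTo I y η) {q : ℝ} (hq : η < q) :
    {k | q < y k} ∈ I :=
  hI.mem_of_subset (fun k (hk : q < y k) => by
    rw [mem_ofPred_eq]
    linarith [le_abs_self (y k - η)]) (hy (q - η) (sub_pos.2 hq))

end IConvTo

lemma tendsto_of_forall_rat_finite {x : ℕ → ℝ} {η : ℝ}
    (hlt : ∀ p : ℚ, (p : ℝ) < η → {n | x n < p}.Finite)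
    (hgt : ∀ q : ℚ, η < q → {n | (q : ℝ) < x n}.Finite) : Tendsto x atTop (𝓝 η) := by
  rw [← Nat.cofinite_eq_atTop]
  refine tendsto_order.2 ⟨fun a ha => ?_, fun b hb => ?_⟩
  · obtain ⟨p, hap, hpη⟩ := exists_rat_btwn ha
    exact (hlt p hpη).eventually_cofinite_notMem.mono fun n hn => hap.trans_le (not_lt.1 hn)
  · obtain ⟨q, hηq, hqb⟩ := exists_rat_btwn hb
    exact (hgt q hηq).eventually_cofinite_notMem.mono fun n hn => (not_lt.1 hn).trans_lt hqb

theorem stmt_6_general (I : Set (Set ℕ)) (hI : IsIdeal I) (hIBorel : BorelFamily I) (x : ℕ → ℝ) :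
    (∃ l : ℝ, Tendsto x atTop (𝓝 l)) ↔
      ¬ IsMeagre {σ : MonoSeq | IConv I (fun n => x (σ.1 n))} := by
  constructor
  · rintro ⟨l, hl⟩
    have : {σ : MonoSeq | IConv I (fun n => x (σ.1 n))} = univ :=
      eq_univ_of_forall fun σ => ⟨l, .of_tendsto hI (hl.comp σ.2.tendsto_atTop)⟩
    rw [this]
    exact not_isMeagre_of_isOpen isOpen_univ ⟨⟨id, strictMono_id⟩, trivial⟩
  · intro hE
    have hbad := (hI.isMeagre_setOf_exists_preimage_mem hIBorel fun p : ℚ => {n | x n < p}).union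
      (hI.isMeagre_setOf_exists_preimage_mem hIBorel fun q : ℚ => {n | (q : ℝ) < x n})
    obtain ⟨σ, ⟨η, hη⟩, hσ⟩ := not_subset.1 fun h => hE (hbad.mono h)
    simp only [mem_union, mem_ofPred_eq, not_or, not_exists, not_and] at hσ
    exact ⟨η, tendsto_of_forall_rat_finite
      (fun p hp => not_infinite.1 fun h => hσ.1 p h (hη.setOf_lt_mem hI hp))
      (fun q hq => not_infinite.1 fun h => hσ.2 q h (hη.setOf_gt_mem hI hq))⟩

/-- For a Borel ideal `I` not containing an isomorphic copy of Fin×Fin,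
`x` is convergent iff `{σ ∈ Σ : σ(x) is I-convergent}` is non-meager in Σ. -/
theorem stmt_6 (I : Set (Set ℕ)) (hI : IsIdeal I) (hIBorel : BorelFamily I)
    (hIcopy : ¬ ContainsIsoCopy I FinTimesFin) (x : ℕ → ℝ) :
    (∃ l : ℝ, Tendsto x atTop (𝓝 l)) ↔
      ¬ IsMeagre {σ : MonoSeq | IConv I (fun n => x (σ.1 n))} :=
  stmt_6_general I hI hIBorel x
end

section
/- Fix a bounded divergent real sequence x, an ideal I on ℕ, and a (Fin,I)-regular infinite real matrix A. Then the set Σ_{x,A}(I) = {σ ∈ Σ : Aσ(x) is well defined and I-convergent} is dense in Σ, and the map T : Σ_{x,A}(I) → ℝ sending σ to the I-limit of Aσ(x) is discontinuous at every point of Σ_{x,A}(I). -/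
open Filter Topology

/-! Two distinct subsequential limits `a ≠ b` of `x` exist. Splicing a long prefix of any
`σ ∈ Σ` with a tail of a subsequence converging to `c ∈ {a, b}` gives `ρ ∈ Σ` close to `σ` with
`ρ(x) → c`, hence, by `(Fin, I)`-regularity, `ρ ∈ Σ_{x,A}(I)` with `T ρ = c`. So every `σ` is a
limit of points of `Σ_{x,A}(I)` on which `T` is constantly `a`, and of others on which it is
constantly `b`. -/

theorem IConvTo.unique {I : Set (Set ℕ)} (hI : IsIdeal I) {y : ℕ → ℝ} {η η' : ℝ}
    (h : IConvTo I y η) (h' : IConvTo I y η') : η = η' := by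
  by_contra hne
  have hε : 0 < |η - η'| / 3 := div_pos (abs_pos.2 (sub_ne_zero.2 hne)) three_pos
  have hcover : Set.univ ⊆ {n | |η - η'| / 3 < |y n - η|} ∪ {n | |η - η'| / 3 < |y n - η'|} := by
    intro n _
    by_contra hn
    simp only [Set.mem_union, Set.mem_ofPred_eq, not_or, not_lt] at hn
    have htri : |η - η'| ≤ |y n - η| + |y n - η'| :=
      calc |η - η'| ≤ |η - y n| + |y n - η'| := abs_sub_le _ _ _
        _ = |y n - η| + |y n - η'| := by rw [abs_sub_comm η]
    linarith
  exact hI.univ_not_mem (hI.mem_of_subset hcover (hI.union_mem (h _ hε) (h' _ hε)))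

theorem exists_ne_mapClusterPt_of_not_tendsto {X Y : Type*} [TopologicalSpace X] {s : Set X}
    (hs : IsCompact s) {l : Filter Y} [l.NeBot] {f : Y → X} (hmem : ∀ y, f y ∈ s)
    (hf : ¬∃ a, Tendsto f l (𝓝 a)) :
    ∃ a b, a ≠ b ∧ MapClusterPt a l f ∧ MapClusterPt b l f := by
  obtain ⟨a, -, ha⟩ := hs.exists_mapClusterPt (f := l) (tendsto_principal.2 (.of_forall hmem))
  by_contra! hunique
  exact hf ⟨a, hs.tendsto_nhds_of_unique_mapClusterPt (.of_forall hmem)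
    fun b _ hb => by_contra fun hba => hunique a b (Ne.symm hba) ha hb⟩

theorem Bdd.exists_ne_mapClusterPt {x : ℕ → ℝ} (hxb : Bdd x)
    (hx : ¬∃ l : ℝ, Tendsto x atTop (𝓝 l)) :
    ∃ a b, a ≠ b ∧ MapClusterPt a atTop x ∧ MapClusterPt b atTop x :=
  let ⟨M, hM⟩ := hxb
  exists_ne_mapClusterPt_of_not_tendsto (isCompact_Icc (a := -M) (b := M))
    (fun n => abs_le.1 (hM n)) hx

theorem exists_strictMono_eqOn_tendsto_comp {α : Type*} {l : Filter α} {f : ℕ → α}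
    {σ τ : ℕ → ℕ} (hσ : StrictMono σ) (hτ : StrictMono τ) (hf : Tendsto (f ∘ τ) atTop l)
    (N : ℕ) : ∃ ρ : ℕ → ℕ, StrictMono ρ ∧ (∀ k < N, ρ k = σ k) ∧ Tendsto (f ∘ ρ) atTop l := by
  refine ⟨fun n => if n < N then σ n else τ (n + σ N), ?_, fun k hk => if_pos hk, ?_⟩
  · refine strictMono_nat_of_lt_succ fun n => ?_
    have hσn : n < N → σ n < σ N := fun h => hσ h
    have hσs : n + 1 < N → σ n < σ (n + 1) := fun _ => hσ n.lt_succ_self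
    have hτn : n + 1 + σ N ≤ τ (n + 1 + σ N) := hτ.le_apply
    have hτs : τ (n + σ N) < τ (n + 1 + σ N) := hτ (by omega)
    split_ifs <;> omega
  · refine (hf.comp (tendsto_add_atTop_nat (σ N))).congr' ?_
    filter_upwards [eventually_ge_atTop N] with n hn
    simp [Nat.not_lt.2 hn]

theorem tendsto_pi_of_forall_lt_eq {α : Type*} [TopologicalSpace α] {u : ℕ → ℕ → α}
    {f : ℕ → α} (h : ∀ N, ∀ k < N, u N k = f k) : Tendsto u atTop (𝓝 f) :=
  tendsto_pi_nhds.2 fun k => tendsto_const_nhds.congr'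
    ((eventually_gt_atTop k).mono fun N hN => (h N k hN).symm)

section SigmaSet

variable {x : ℕ → ℝ} {I : Set (Set ℕ)} {A : ℕ → ℕ → ℝ}

theorem FinIRegular.mem_sigmaSet (hA : FinIRegular I A) (hxb : Bdd x) {σ : MonoSeq} {c : ℝ}
    (hσ : Tendsto (fun k => x (σ.1 k)) atTop (𝓝 c)) :
    σ ∈ SigmaSet x A I ∧ IConvTo I (matMul A (fun k => x (σ.1 k))) c := by
  obtain ⟨M, hM⟩ := hxb
  obtain ⟨hrows, -, hlim⟩ := hA _ ⟨M, fun k => hM _⟩ c hσ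
  exact ⟨⟨hrows, c, hlim⟩, hlim⟩

theorem exists_tendsto_sigmaSet_of_mapClusterPt (hA : FinIRegular I A) (hxb : Bdd x) {c : ℝ}
    (hc : MapClusterPt c atTop x) (σ : MonoSeq) :
    ∃ u : ℕ → MonoSeq, Tendsto u atTop (𝓝 σ) ∧ (∀ N, u N ∈ SigmaSet x A I) ∧
      ∀ N, IConvTo I (matMul A (fun k => x ((u N).1 k))) c := by
  obtain ⟨τ, hτ, hxτ⟩ := hc.tendsto_subseq
  choose ρ hρ hρσ hxρ using exists_strictMono_eqOn_tendsto_comp σ.2 hτ hxτ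
  let u N : MonoSeq := ⟨ρ N, hρ N⟩
  have hu : Tendsto u atTop (𝓝 σ) := tendsto_subtype_rng.2 (tendsto_pi_of_forall_lt_eq hρσ)
  exact ⟨u, hu, fun N => (hA.mem_sigmaSet (σ := u N) hxb (hxρ N)).1,
    fun N => (hA.mem_sigmaSet (σ := u N) hxb (hxρ N)).2⟩

end SigmaSet

/-- For bounded divergent `x`, an ideal `I`, and a (Fin,I)-regular matrix `A`,
the set Σ_{x,A}(I) is dense in Σ and the map `T` sending σ to the I-limit of Aσ(x)
is discontinuous at every point of Σ_{x,A}(I). -/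
theorem stmt_9 (x : ℕ → ℝ) (hxb : Bdd x) (hx : ¬ ∃ l : ℝ, Tendsto x atTop (𝓝 l))
    (I : Set (Set ℕ)) (hI : IsIdeal I) (A : ℕ → ℕ → ℝ) (hA : FinIRegular I A)
    (T : MonoSeq → ℝ)
    (hT : ∀ σ ∈ SigmaSet x A I, IConvTo I (matMul A (fun k => x (σ.1 k))) (T σ)) :
    Dense (SigmaSet x A I) ∧
      ∀ σ ∈ SigmaSet x A I, ¬ ContinuousWithinAt T (SigmaSet x A I) σ := by
  obtain ⟨a, b, hab, ha, hb⟩ := hxb.exists_ne_mapClusterPt hx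
  refine ⟨fun σ => ?_, fun σ _ hcont => hab ?_⟩
  · obtain ⟨u, hu, huS, -⟩ := exists_tendsto_sigmaSet_of_mapClusterPt hA hxb ha σ
    exact mem_closure_of_tendsto hu (.of_forall huS)
  · have hTσ : ∀ c, MapClusterPt c atTop x → T σ = c := fun c hc => by
      obtain ⟨u, hu, huS, huc⟩ := exists_tendsto_sigmaSet_of_mapClusterPt hA hxb hc σ
      have hTu : Tendsto (T ∘ u) atTop (𝓝 (T σ)) :=
        hcont.tendsto.comp (tendsto_nhdsWithin_iff.2 ⟨hu, .of_forall huS⟩)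
      exact tendsto_nhds_unique hTu
        (tendsto_const_nhds.congr fun N => ((hT _ (huS N)).unique hI (huc N)).symm)
    exact (hTσ a ha).symm.trans (hTσ b hb)
end

section
/- Fix an unbounded real sequence x and a real sequence a that is not eventually zero. Then the set {σ ∈ Σ : the sequence of partial sums (∑_{k ≤ n} a_k x_{σ(k)})_n is bounded} is meager in Σ. -/
open Filter Topology

/-! The partial sums bounded by a fixed `M` form a closed subset of `Σ`, so it suffices that it has
empty interior. Given `σ` and `N`, keep `σ` up to `N`, pick `k > N` with `a k ≠ 0`, and jump
at position `k` to an index `b` where `|x b|` is so large that the `k`-th partial sum exceeds `M`;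
after `b` continue consecutively to stay strictly increasing. -/

lemma exists_le_lt_abs_of_not_bdd {x : ℕ → ℝ} (hx : ¬ Bdd x) (L : ℕ) (R : ℝ) :
    ∃ n, L ≤ n ∧ R < |x n| := by
  by_contra! hR
  refine hx ⟨max R (∑ n ∈ Finset.range L, |x n|), fun n => ?_⟩
  rcases lt_or_ge n L with hn | hn
  · exact le_max_of_le_right <| Finset.single_le_sum (fun i _ => abs_nonneg (x i))
      (Finset.mem_range.2 hn)
  · exact le_max_of_le_left (hR n hn)

def spliceFrom (σ : ℕ → ℕ) (k b : ℕ) : ℕ → ℕ := fun j => if j < k then σ j else b + (j - k)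

lemma spliceFrom_of_lt {σ : ℕ → ℕ} {k b j : ℕ} (hj : j < k) : spliceFrom σ k b j = σ j :=
  if_pos hj

lemma spliceFrom_self (σ : ℕ → ℕ) (k b : ℕ) : spliceFrom σ k b k = b := by
  simp [spliceFrom]

lemma StrictMono.spliceFrom {σ : ℕ → ℕ} (hσ : StrictMono σ) {k b : ℕ} (hb : σ k ≤ b) :
    StrictMono (spliceFrom σ k b) := by
  refine strictMono_nat_of_lt_succ fun j => ?_
  have hj : σ j < σ (j + 1) := hσ j.lt_succ_self
  have hjk : j < k → σ j < σ k := fun h => hσ h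
  unfold _root_.spliceFrom
  split_ifs <;> omega

def partialSumsBoundedBy (a x : ℕ → ℝ) (M : ℝ) : Set MonoSeq :=
  {σ | ∀ n, |∑ k ∈ Finset.range (n + 1), a k * x (σ.1 k)| ≤ M}

lemma isClosed_partialSumsBoundedBy (a x : ℕ → ℝ) (M : ℝ) :
    IsClosed (partialSumsBoundedBy a x M) := by
  rw [partialSumsBoundedBy, Set.ofPred_forall]
  refine isClosed_iInter fun n => isClosed_le ?_ continuous_const
  refine (continuous_finsetSum _ fun k _ => continuous_const.mul ?_).abs
  exact continuous_of_discreteTopology.comp ((continuous_apply k).comp continuous_subtype_val)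

lemma exists_agree_notMem_partialSumsBoundedBy {x : ℕ → ℝ} (hx : ¬ Bdd x) {a : ℕ → ℝ}
    (ha : ¬ ∃ k₀ : ℕ, ∀ k ≥ k₀, a k = 0) (M : ℝ) (σ : MonoSeq) (N : ℕ) :
    ∃ τ : MonoSeq, (∀ j ≤ N, τ.1 j = σ.1 j) ∧ τ ∉ partialSumsBoundedBy a x M := by
  push Not at ha
  obtain ⟨k, hNk, hak⟩ := ha (N + 1)
  set P := ∑ j ∈ Finset.range k, a j * x (σ.1 j)
  have hak : 0 < |a k| := abs_pos.2 hak
  obtain ⟨b, hb, hxb⟩ := exists_le_lt_abs_of_not_bdd hx (σ.1 k) ((M + |P|) / |a k|)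
  rw [div_lt_iff₀' hak] at hxb
  let τ : MonoSeq := ⟨spliceFrom σ.1 k b, σ.2.spliceFrom hb⟩
  refine ⟨τ, fun j hj => spliceFrom_of_lt (by omega), fun hτ => ?_⟩
  have hsum : ∑ j ∈ Finset.range (k + 1), a j * x (spliceFrom σ.1 k b j) = P + a k * x b := by
    rw [Finset.sum_range_succ, spliceFrom_self]
    congr 1
    exact Finset.sum_congr rfl fun j hj => by rw [spliceFrom_of_lt (Finset.mem_range.1 hj)]
  have hbound : |P + a k * x b| ≤ M := by simpa only [τ, hsum] using hτ k
  have htriangle : |a k| * |x b| ≤ |P + a k * x b| + |P| := by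
    simpa [abs_mul] using abs_sub (P + a k * x b) P
  linarith

lemma interior_eq_empty_of_forall_exists_agree {α : Type*} [TopologicalSpace α]
    {p : (ℕ → α) → Prop} {S : Set {f // p f}}
    (h : ∀ (σ : {f // p f}) (N : ℕ), ∃ τ ∉ S, ∀ j ≤ N, τ.1 j = σ.1 j) : interior S = ∅ := by
  refine Set.eq_empty_of_forall_notMem fun σ hσ => ?_
  choose τ hτS hτσ using h σ
  have hτ : Tendsto τ atTop (𝓝 σ) := by
    rw [tendsto_subtype_rng, tendsto_pi_nhds]
    refine fun j => tendsto_const_nhds.congr' ?_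
    filter_upwards [eventually_ge_atTop j] with N hN using (hτσ N j hN).symm
  obtain ⟨N, hN⟩ := (hτ.eventually_mem (isOpen_interior.mem_nhds hσ)).exists
  exact hτS N (interior_subset hN)

lemma isMeagre_partialSumsBoundedBy {x : ℕ → ℝ} (hx : ¬ Bdd x) {a : ℕ → ℝ}
    (ha : ¬ ∃ k₀ : ℕ, ∀ k ≥ k₀, a k = 0) (M : ℝ) :
    IsMeagre (partialSumsBoundedBy a x M) := by
  refine IsNowhereDense.isMeagre <| (isClosed_partialSumsBoundedBy a x M).isNowhereDense_iff.2 ?_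
  refine interior_eq_empty_of_forall_exists_agree fun σ N => ?_
  obtain ⟨τ, hτσ, hτ⟩ := exists_agree_notMem_partialSumsBoundedBy hx ha M σ N
  exact ⟨τ, hτ, hτσ⟩

/-- For unbounded `x` and `a` not eventually zero, the set of σ ∈ Σ for
which the partial sums (∑_{k ≤ n} a_k x_{σ(k)})_n are bounded is meager in Σ. -/
theorem stmt_11 (x : ℕ → ℝ) (hx : ¬ Bdd x) (a : ℕ → ℝ)
    (ha : ¬ ∃ k₀ : ℕ, ∀ k ≥ k₀, a k = 0) :
    IsMeagre {σ : MonoSeq |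
      ∃ M : ℝ, ∀ n : ℕ, |∑ k ∈ Finset.range (n + 1), a k * x (σ.1 k)| ≤ M} := by
  refine (isMeagre_iUnion fun m : ℕ => isMeagre_partialSumsBoundedBy hx ha m).mono ?_
  rintro σ ⟨M, hM⟩
  obtain ⟨m, hm⟩ := exists_nat_ge M
  exact Set.mem_iUnion.2 ⟨m, fun n => (hM n).trans hm⟩
end

section
/- Let A = (a_{n,k}) be an infinite real matrix that is not row finite (i.e. some row of A is not eventually zero), and fix an unbounded real sequence x. Then the set {σ ∈ Σ : for every n, the series ∑_k a_{n,k} x_{σ(k)} converges} is meager in Σ. -/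
open Filter Topology

/-!
Take a row `n₀` of `A` with infinitely many nonzero entries. If every row series converges along
`σ`, the terms `a_{n₀,k} x_{σ(k)}` are bounded by some `M ∈ ℕ`, so the set in question lies in the
countable union over `M` of the sets `{σ | ∀ k, |a_{n₀,k} x_{σ(k)}| ≤ M}`. Each of these is
closed, since it constrains every coordinate separately. It has empty interior: a basic
neighbourhood only fixes an initial segment of `σ`, and beyond it there is a column `k` with
`a_{n₀,k} ≠ 0`, at which `σ` can be redirected to an index `j` with `|x_j|` as large as needed,
`x` being unbounded.
-/

lemma SeriesConv.exists_abs_le {f : ℕ → ℝ} (h : SeriesConv f) : ∃ C : ℝ, ∀ k, |f k| ≤ C := by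
  obtain ⟨l, hl⟩ := h
  obtain ⟨C, hC⟩ := isBounded_iff_forall_norm_le.mp (Metric.isBounded_range_of_tendsto _ hl)
  refine ⟨C + C, fun k => ?_⟩
  have hsucc := hC _ ⟨k + 1, rfl⟩
  have hk := hC _ ⟨k, rfl⟩
  rw [Real.norm_eq_abs] at hsucc hk
  calc |f k| = |∑ i ∈ Finset.range (k + 1), f i - ∑ i ∈ Finset.range k, f i| := by
        rw [Finset.sum_range_succ, add_sub_cancel_left]
    _ ≤ C + C := (abs_sub _ _).trans (add_le_add hsucc hk)

lemma exists_lt_abs_of_not_bdd {x : ℕ → ℝ} (hx : ¬ Bdd x) (C : ℝ) (m : ℕ) :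
    ∃ j, m < j ∧ C < |x j| := by
  by_contra! h
  refine hx ⟨max C (∑ i ∈ Finset.range (m + 1), |x i|), fun j => ?_⟩
  rcases le_or_gt j m with hjm | hjm
  · exact le_max_of_le_right <| Finset.single_le_sum (fun i _ => abs_nonneg (x i))
      (Finset.mem_range.mpr (Nat.lt_succ_of_le hjm))
  · exact le_max_of_le_left (h j hjm)

namespace MonoSeq

lemma exists_forall_mem_of_mem_nhds {σ : MonoSeq} {S : Set MonoSeq} (hS : S ∈ 𝓝 σ) :
    ∃ N, ∀ τ : MonoSeq, (∀ i < N, τ.1 i = σ.1 i) → τ ∈ S := by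
  obtain ⟨u, hu, huS⟩ := (mem_nhds_subtype _ σ S).mp hS
  obtain ⟨_, ⟨y, N, rfl⟩, hσy, hyu⟩ :=
    ((PiNat.isTopologicalBasis_cylinders fun _ => ℕ).mem_nhds_iff).mp hu
  refine ⟨N, fun τ hτ => huS (hyu ?_)⟩
  rw [← PiNat.mem_cylinder_iff_eq.mp hσy]
  exact hτ

def splice (σ : ℕ → ℕ) (k j : ℕ) : ℕ → ℕ := fun i => if i < k then σ i else j + (i - k)

lemma strictMono_splice {σ : ℕ → ℕ} (hσ : StrictMono σ) {k j : ℕ} (hj : ∀ i < k, σ i < j) :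
    StrictMono (splice σ k j) := by
  refine strictMono_nat_of_lt_succ fun i => ?_
  simp only [splice]
  by_cases hik : i + 1 < k
  · rw [if_pos (by omega), if_pos hik]
    exact hσ (Nat.lt_succ_self i)
  by_cases hi : i < k
  · rw [if_pos hi, if_neg hik]
    exact (hj i hi).trans_le (Nat.le_add_right _ _)
  · rw [if_neg hi, if_neg hik]
    omega

lemma isClosed_setOf_forall_apply_mem (p : ℕ → Set ℕ) :
    IsClosed {σ : MonoSeq | ∀ k, σ.1 k ∈ p k} := by
  simp only [Set.ofPred_forall]
  exact isClosed_iInter fun k =>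
    (isClosed_discrete (p k)).preimage ((continuous_apply k).comp continuous_subtype_val)

lemma interior_setOf_forall_apply_mem_eq_empty {p : ℕ → Set ℕ}
    (hp : ∀ N, ∃ k ≥ N, ∀ m, ∃ j, m < j ∧ j ∉ p k) :
    interior {σ : MonoSeq | ∀ k, σ.1 k ∈ p k} = ∅ := by
  refine Set.eq_empty_iff_forall_notMem.mpr fun σ hσ => ?_
  obtain ⟨N, hN⟩ := exists_forall_mem_of_mem_nhds (mem_interior_iff_mem_nhds.mp hσ)
  obtain ⟨k, hkN, hk⟩ := hp N
  obtain ⟨j, hσj, hjp⟩ := hk (σ.1 k)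
  have hτ := strictMono_splice σ.2 fun i hi => (σ.2 hi).trans hσj
  have hmem := hN ⟨_, hτ⟩ fun i hi => if_pos (hi.trans_le hkN)
  exact hjp (by simpa [splice] using hmem k)

lemma isMeagre_setOf_forall_apply_mem {p : ℕ → Set ℕ}
    (hp : ∀ N, ∃ k ≥ N, ∀ m, ∃ j, m < j ∧ j ∉ p k) :
    IsMeagre {σ : MonoSeq | ∀ k, σ.1 k ∈ p k} :=
  ((isClosed_setOf_forall_apply_mem p).isNowhereDense_iff.mpr
    (interior_setOf_forall_apply_mem_eq_empty hp)).isMeagre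

end MonoSeq

/-- If `A` is not row finite and `x` is unbounded, then
`{σ ∈ Σ : every series ∑_k a_{n,k} x_{σ(k)} converges}` is meager in Σ. -/
theorem stmt_12 (A : ℕ → ℕ → ℝ) (hA : ¬ ∀ n : ℕ, ∃ k₀ : ℕ, ∀ k ≥ k₀, A n k = 0)
    (x : ℕ → ℝ) (hx : ¬ Bdd x) :
    IsMeagre {σ : MonoSeq | RowsConv A (fun k => x (σ.1 k))} := by
  push Not at hA
  obtain ⟨n₀, hn₀⟩ := hA
  let bound : ℕ → ℕ → Set ℕ := fun M k => {m | |A n₀ k * x m| ≤ M}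
  have hsub : {σ : MonoSeq | RowsConv A (fun k => x (σ.1 k))} ⊆
      ⋃ M : ℕ, {σ : MonoSeq | ∀ k, σ.1 k ∈ bound M k} := by
    intro σ hσ
    obtain ⟨C, hC⟩ := (hσ n₀).exists_abs_le
    obtain ⟨M, hM⟩ := exists_nat_ge C
    exact Set.mem_iUnion.mpr ⟨M, fun k => (hC k).trans hM⟩
  refine (isMeagre_iUnion fun M => MonoSeq.isMeagre_setOf_forall_apply_mem fun N => ?_).mono hsub
  obtain ⟨k, hkN, hAk⟩ := hn₀ N
  refine ⟨k, hkN, fun m => ?_⟩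
  obtain ⟨j, hmj, hj⟩ := exists_lt_abs_of_not_bdd hx (M / |A n₀ k|) m
  refine ⟨j, hmj, fun hbound : |A n₀ k * x j| ≤ M => hbound.not_gt ?_⟩
  rw [abs_mul, ← div_lt_iff₀' (abs_pos.mpr hAk)]
  exact hj
end

section
/- Let I be an ideal on ℕ, A a (Fin,I)-regular infinite real matrix, and x a bounded real sequence. If σ₁, σ₂ ∈ Σ satisfy σ₁(n) = σ₂(n) for all but finitely many n, and Aσ₁(x) is well defined and I-convergent, then Aσ₂(x) is well defined and I-convergent with the same I-limit. In particular, the set Σ_{x,A}(I) = {σ ∈ Σ : Aσ(x) is well defined and I-convergent} is a tail subset of Σ. -/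
open Filter Topology

/-! The matrix is linear on rows where both series converge, so `A σ₂(x) = A σ₁(x) + A z` with
`z = σ₂(x) - σ₁(x)`. Since `σ₁` and `σ₂` agree eventually, `z` is eventually zero, hence bounded
and convergent to `0`; `(Fin, I)`-regularity makes `A z` well defined and `I`-convergent to `0`,
and `I`-limits add. -/

lemma SeriesConv.tendsto_seriesSum {f : ℕ → ℝ} (hf : SeriesConv f) :
    Tendsto (fun N => ∑ k ∈ Finset.range N, f k) atTop (𝓝 (seriesSum f)) := by
  obtain ⟨l, hl⟩ := hf
  rwa [seriesSum, hl.limUnder_eq]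

lemma SeriesConv.add {f g : ℕ → ℝ} (hf : SeriesConv f) (hg : SeriesConv g) :
    SeriesConv (fun k => f k + g k) :=
  ⟨_, by simpa only [Finset.sum_add_distrib] using hf.tendsto_seriesSum.add hg.tendsto_seriesSum⟩

lemma seriesSum_add {f g : ℕ → ℝ} (hf : SeriesConv f) (hg : SeriesConv g) :
    seriesSum (fun k => f k + g k) = seriesSum f + seriesSum g :=
  tendsto_nhds_unique (hf.add hg).tendsto_seriesSum
    (by simpa only [Finset.sum_add_distrib] using hf.tendsto_seriesSum.add hg.tendsto_seriesSum)

lemma RowsConv.add {A : ℕ → ℕ → ℝ} {y z : ℕ → ℝ} (hy : RowsConv A y) (hz : RowsConv A z) :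
    RowsConv A (y + z) := fun n => by
  simpa only [Pi.add_apply, mul_add] using (hy n).add (hz n)

lemma matMul_add {A : ℕ → ℕ → ℝ} {y z : ℕ → ℝ} (hy : RowsConv A y) (hz : RowsConv A z) :
    matMul A (y + z) = matMul A y + matMul A z := funext fun n => by
  simpa only [matMul, Pi.add_apply, mul_add] using seriesSum_add (hy n) (hz n)

lemma IConvTo.add {I : Set (Set ℕ)} (hI : IsIdeal I) {u v : ℕ → ℝ} {η θ : ℝ}
    (hu : IConvTo I u η) (hv : IConvTo I v θ) : IConvTo I (u + v) (η + θ) := by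
  intro ε hε
  refine hI.mem_of_subset ?_ (hI.union_mem (hu (ε / 2) (half_pos hε)) (hv (ε / 2) (half_pos hε)))
  intro n hn
  by_contra hsmall
  simp only [Set.mem_union, Set.mem_ofPred_eq, not_or, not_lt] at hn hsmall
  have : |u n + v n - (η + θ)| ≤ ε :=
    calc |u n + v n - (η + θ)| = |(u n - η) + (v n - θ)| := by ring_nf
      _ ≤ |u n - η| + |v n - θ| := abs_add_le _ _
      _ ≤ ε := by linarith [hsmall.1, hsmall.2]
  exact hn.not_ge this

lemma bdd_of_tendsto {y : ℕ → ℝ} {l : ℝ} (hy : Tendsto y atTop (𝓝 l)) : Bdd y := by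
  obtain ⟨M, hM⟩ := isBounded_iff_forall_norm_le.1 (Metric.isBounded_range_of_tendsto y hy)
  exact ⟨M, fun n => hM _ (Set.mem_range_self n)⟩

lemma FinIRegular.rowsConv_iConvTo_of_eventuallyEq {I : Set (Set ℕ)} (hI : IsIdeal I)
    {A : ℕ → ℕ → ℝ} (hA : FinIRegular I A) {y₁ y₂ : ℕ → ℝ} (hy : y₁ =ᶠ[atTop] y₂) {η : ℝ}
    (hrows : RowsConv A y₁) (hη : IConvTo I (matMul A y₁) η) :
    RowsConv A y₂ ∧ IConvTo I (matMul A y₂) η := by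
  have hdiff : Tendsto (y₂ - y₁) atTop (𝓝 0) :=
    tendsto_const_nhds.congr' (hy.mono fun n h => by simp [h])
  obtain ⟨hrows_diff, -, hη_diff⟩ := hA _ (bdd_of_tendsto hdiff) 0 hdiff
  have hsplit : y₂ = y₁ + (y₂ - y₁) := (add_sub_cancel y₁ y₂).symm
  refine ⟨hsplit ▸ hrows.add hrows_diff, ?_⟩
  rw [hsplit, matMul_add hrows hrows_diff, ← add_zero η]
  exact hη.add hI hη_diff

theorem stmt_15_general (I : Set (Set ℕ)) (hI : IsIdeal I) (A : ℕ → ℕ → ℝ) (hA : FinIRegular I A)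
    (x : ℕ → ℝ) :
    (∀ σ₁ σ₂ : MonoSeq, (∀ᶠ n in atTop, σ₁.1 n = σ₂.1 n) → ∀ η : ℝ,
        RowsConv A (fun k => x (σ₁.1 k)) →
        IConvTo I (matMul A (fun k => x (σ₁.1 k))) η →
        RowsConv A (fun k => x (σ₂.1 k)) ∧
          IConvTo I (matMul A (fun k => x (σ₂.1 k))) η) ∧
    (∀ σ₁ σ₂ : MonoSeq, σ₁ ∈ SigmaSet x A I → (∀ᶠ n in atTop, σ₁.1 n = σ₂.1 n) →
        σ₂ ∈ SigmaSet x A I) := by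
  have hsame : ∀ σ₁ σ₂ : MonoSeq, (∀ᶠ n in atTop, σ₁.1 n = σ₂.1 n) → ∀ η : ℝ,
      RowsConv A (fun k => x (σ₁.1 k)) → IConvTo I (matMul A (fun k => x (σ₁.1 k))) η →
      RowsConv A (fun k => x (σ₂.1 k)) ∧ IConvTo I (matMul A (fun k => x (σ₂.1 k))) η :=
    fun σ₁ σ₂ hσ _ => hA.rowsConv_iConvTo_of_eventuallyEq hI (hσ.mono fun n h => by simp only [h])
  refine ⟨hsame, ?_⟩
  rintro σ₁ σ₂ ⟨hrows, η, hη⟩ hσ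
  obtain ⟨hrows₂, hη₂⟩ := hsame σ₁ σ₂ hσ η hrows hη
  exact ⟨hrows₂, η, hη₂⟩

/-- For an ideal `I`, a (Fin,I)-regular matrix `A` and bounded `x`:
if σ₁ and σ₂ agree at all but finitely many coordinates and Aσ₁(x) is well defined and
I-convergent to η, then so is Aσ₂(x); in particular Σ_{x,A}(I) is a tail subset of Σ. -/
theorem stmt_15 (I : Set (Set ℕ)) (hI : IsIdeal I) (A : ℕ → ℕ → ℝ) (hA : FinIRegular I A)
    (x : ℕ → ℝ) (hxb : Bdd x) :
    (∀ σ₁ σ₂ : MonoSeq, (∀ᶠ n in atTop, σ₁.1 n = σ₂.1 n) → ∀ η : ℝ,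
        RowsConv A (fun k => x (σ₁.1 k)) →
        IConvTo I (matMul A (fun k => x (σ₁.1 k))) η →
        RowsConv A (fun k => x (σ₂.1 k)) ∧
          IConvTo I (matMul A (fun k => x (σ₂.1 k))) η) ∧
    (∀ σ₁ σ₂ : MonoSeq, σ₁ ∈ SigmaSet x A I → (∀ᶠ n in atTop, σ₁.1 n = σ₂.1 n) →
        σ₂ ∈ SigmaSet x A I) :=
  stmt_15_general I hI A hA x
end
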